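/- arXiv:1009.2051 — 2 statements merged into one kernel-verified Lean document; each statement's English description precedes it below -/
import Mathlib

section
/- Let d ≥ 2 be an integer and n a real number with n > d/2 + 1. Let (v_h)_{h∈Z^d_0} and (w_ℓ)_{ℓ∈Z^d_0} be families of vectors in C^d with h·v_h = 0 for all h ∈ Z^d_0, Σ_{h∈Z^d_0} |h|^{2n}|v_h|^2 < ∞ and Σ_{ℓ∈Z^d_0} |ℓ|^{2n}|w_ℓ|^2 < ∞. For each k ∈ Z^d_0 set z_k := i (2π)^{−d/2} Σ_{h∈Z^d_{0k}} [v_h·(k−h)] (|k|^n − |k−h|^n) w_{k−h}. Then Σ_{k∈Z^d_0} |z_k|^2 ≤ (2π)^{−d} · ( sup_{k∈Z^d_0} G_n(k) ) · ( Σ_{h∈Z^d_0} |h|^{2n}|v_h|^2 ) · ( Σ_{ℓ∈Z^d_0} |ℓ|^{2n}|w_ℓ|^2 ). -/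
noncomputable section

/-- Euclidean norm of a lattice point of `ℤ^d`. -/
def znorm {d : ℕ} (k : Fin d → ℤ) : ℝ := Real.sqrt (∑ i, ((k i : ℝ)) ^ 2)

/-- Squared norm `|h ∧ k|² = |h|²|k|² − (h·k)²` of the exterior product. -/
def wedgeSq {d : ℕ} (h k : Fin d → ℤ) : ℝ :=
  (∑ i, ((h i : ℝ)) ^ 2) * (∑ i, ((k i : ℝ)) ^ 2) - (∑ i, (h i : ℝ) * (k i : ℝ)) ^ 2

/-- Squared Hermitian norm of a vector of `ℂ^d`. -/
def cnormSq {d : ℕ} (a : Fin d → ℂ) : ℝ := ∑ i, Complex.normSq (a i)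

/-- The function `G_n : ℤ^d_0 → [0,∞]` of the paper:
`G_n(k) = Σ_{h ∈ ℤ^d_{0k}} |h ∧ k|² (|k|^n − |k−h|^n)² / (|h|^{2n+2}|k−h|^{2n})`. -/
def Gn (d : ℕ) (n : ℝ) (k : Fin d → ℤ) : ENNReal :=
  ∑' h : {h : Fin d → ℤ // h ≠ 0 ∧ h ≠ k},
    ENNReal.ofReal (wedgeSq h.1 k * (znorm k ^ n - znorm (k - h.1) ^ n) ^ 2 /
      (znorm h.1 ^ (2 * n + 2) * znorm (k - h.1) ^ (2 * n)))

/-!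
Fix `k`. Because `h · v_h = 0`, the factor `v_h · (k - h) = v_h · k` only sees the component of
`k` orthogonal to `h`, whose length is `|h ∧ k| / |h|`. Hence the `h`-th term of `z_k` is at most
`√λ_h · |h|^n |v_h| · |k - h|^n |w_{k-h}|`, where `λ_h` is the `h`-th summand of `G_n(k)`, and
Cauchy–Schwarz in `h` gives
`|z_k|² ≤ (2π)^{-d} G_n(k) Σ_h |h|^{2n} |v_h|² |k - h|^{2n} |w_{k-h}|²`.
Summing over `k`, the convolution on the right is at most the product of the two weighted sums.
Working in `[0, ∞]` throughout, no summability of the series defining `z_k` is needed.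
-/

open ENNReal

theorem ENNReal.tsum_sq_le_of_sq_le_mul {ι : Type*} {x a b : ι → ℝ≥0∞}
    (hx : ∀ i, x i ^ 2 ≤ a i * b i) : (∑' i, x i) ^ 2 ≤ (∑' i, a i) * ∑' i, b i := by
  let _ : MeasurableSpace ι := ⊤
  have hx' : ∀ i, x i ≤ a i ^ (1 / 2 : ℝ) * b i ^ (1 / 2 : ℝ) := fun i => by
    rw [← ENNReal.mul_rpow_of_nonneg _ _ (by norm_num), one_div,
      ENNReal.le_rpow_inv_iff (by norm_num), ENNReal.rpow_two]
    exact hx i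
  have holder := ENNReal.lintegral_mul_le_Lp_mul_Lq MeasureTheory.Measure.count
    Real.HolderConjugate.two_two
    (measurable_from_top (f := fun i => a i ^ (1 / 2 : ℝ))).aemeasurable
    (measurable_from_top (f := fun i => b i ^ (1 / 2 : ℝ))).aemeasurable
  simp only [Pi.mul_apply, MeasureTheory.lintegral_count' measurable_from_top,
    ← ENNReal.rpow_mul] at holder
  norm_num at holder
  calc (∑' i, x i) ^ 2 ≤ ((∑' i, a i) ^ (1 / 2 : ℝ) * (∑' i, b i) ^ (1 / 2 : ℝ)) ^ 2 := by
        gcongr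
        exact (ENNReal.tsum_le_tsum hx').trans holder
    _ = (∑' i, a i) * ∑' i, b i := by
        rw [← ENNReal.mul_rpow_of_nonneg _ _ (by norm_num), ← ENNReal.rpow_two,
          ← ENNReal.rpow_mul]
        norm_num

lemma tsum_tsum_mul_sub_le_tsum_mul_tsum {G : Type*} [AddGroup G] (F W : G → ℝ≥0∞) :
    ∑' (k : {k : G // k ≠ 0}) (h : {h : G // h ≠ 0 ∧ h ≠ k.1}), F h.1 * W (k.1 - h.1) ≤
      (∑' h : {h : G // h ≠ 0}, F h.1) * ∑' ℓ : {ℓ : G // ℓ ≠ 0}, W ℓ.1 := by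
  let e : (Σ k : {k : G // k ≠ 0}, {h : G // h ≠ 0 ∧ h ≠ k.1}) →
      {h : G // h ≠ 0} × {ℓ : G // ℓ ≠ 0} :=
    fun p => (⟨p.2.1, p.2.2.1⟩, ⟨p.1.1 - p.2.1, sub_ne_zero.mpr p.2.2.2.symm⟩)
  have he : Function.Injective e := by
    rintro ⟨⟨k, _⟩, ⟨h, _⟩⟩ ⟨⟨k', _⟩, ⟨h', _⟩⟩ heq
    simp only [e, Prod.mk.injEq, Subtype.mk.injEq] at heq
    obtain ⟨rfl, hk⟩ := heq
    obtain rfl := sub_left_injective hk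
    rfl
  rw [← ENNReal.tsum_mul_right, ← ENNReal.tsum_sigma]
  simp only [← ENNReal.tsum_mul_left]
  rw [← ENNReal.tsum_prod]
  exact ENNReal.tsum_comp_le_tsum_of_injective he (fun q => F q.1.1 * W q.2.1)

section

variable {d : ℕ}

lemma cnormSq_nonneg (a : Fin d → ℂ) : 0 ≤ cnormSq a :=
  Finset.sum_nonneg fun _ _ => Complex.normSq_nonneg _

lemma ofReal_cnormSq (a : Fin d → ℂ) : ENNReal.ofReal (cnormSq a) = ∑ i, ‖a i‖ₑ ^ 2 := by
  rw [cnormSq, ENNReal.ofReal_sum_of_nonneg fun _ _ => Complex.normSq_nonneg _]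
  refine Finset.sum_congr rfl fun i _ => ?_
  rw [← Complex.sq_norm, ENNReal.ofReal_pow (norm_nonneg _), ofReal_norm]

lemma norm_sum_mul_ofReal_sq_le (v : Fin d → ℂ) (m : Fin d → ℝ) :
    ‖∑ i, v i * m i‖ ^ 2 ≤ cnormSq v * ∑ i, m i ^ 2 := by
  have hcs := pow_le_pow_left₀ (norm_nonneg _) (norm_inner_le_norm (𝕜 := ℂ)
    (WithLp.toLp 2 (fun i => (m i : ℂ)) : EuclideanSpace ℂ (Fin d)) (WithLp.toLp 2 v)) 2
  rw [mul_pow, EuclideanSpace.norm_sq_eq, EuclideanSpace.norm_sq_eq, PiLp.inner_apply] at hcs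
  simpa [cnormSq, Complex.sq_norm, mul_comm] using hcs

lemma sum_sq_pos {h : Fin d → ℤ} (hh : h ≠ 0) : 0 < ∑ i, (h i : ℝ) ^ 2 := by
  obtain ⟨i, hi⟩ := Function.ne_iff.mp hh
  have hi' : (h i : ℝ) ≠ 0 := Int.cast_ne_zero.mpr hi
  exact Finset.sum_pos' (fun _ _ => sq_nonneg _) ⟨i, Finset.mem_univ i, by positivity⟩

lemma znorm_nonneg (k : Fin d → ℤ) : 0 ≤ znorm k := Real.sqrt_nonneg _

lemma znorm_pos {k : Fin d → ℤ} (hk : k ≠ 0) : 0 < znorm k :=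
  Real.sqrt_pos.mpr (sum_sq_pos hk)

lemma znorm_sq (k : Fin d → ℤ) : znorm k ^ 2 = ∑ i, (k i : ℝ) ^ 2 :=
  Real.sq_sqrt (Finset.sum_nonneg fun _ _ => sq_nonneg _)

lemma wedgeSq_nonneg (h k : Fin d → ℤ) : 0 ≤ wedgeSq h k :=
  sub_nonneg.mpr (Finset.sum_mul_sq_le_sq_mul_sq _ _ _)

lemma sum_mul_sub_eq_sum_mul_of_orthogonal {h : Fin d → ℤ} {v : Fin d → ℂ}
    (hdv : ∑ i, (h i : ℂ) * v i = 0) (k : Fin d → ℤ) :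
    ∑ i, v i * ((k i - h i : ℤ) : ℂ) = ∑ i, v i * (k i : ℂ) := by
  simp only [Int.cast_sub, mul_sub, Finset.sum_sub_distrib, sub_eq_self]
  simpa only [mul_comm] using hdv

/-- Cauchy–Schwarz against `m = |h|² k - (h·k) h`, which satisfies `v · m = |h|² (v · k)` since
`v ⊥ h`, and `|m|² = |h|² |h ∧ k|²`. -/
lemma sum_sq_mul_norm_sum_mul_sq_le {h : Fin d → ℤ} (hh : h ≠ 0) (k : Fin d → ℤ)
    {v : Fin d → ℂ} (hdv : ∑ i, (h i : ℂ) * v i = 0) :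
    (∑ i, (h i : ℝ) ^ 2) * ‖∑ i, v i * (k i : ℂ)‖ ^ 2 ≤ cnormSq v * wedgeSq h k := by
  set S : ℝ := ∑ i, (h i : ℝ) ^ 2
  set P : ℝ := ∑ i, (h i : ℝ) * (k i : ℝ)
  set m : Fin d → ℝ := fun i => S * k i - P * h i
  have hS : 0 < S := sum_sq_pos hh
  have hvm : ∑ i, v i * (m i : ℂ) = S * ∑ i, v i * (k i : ℂ) := by
    have hvh : ∑ i, v i * (h i : ℂ) = 0 := by simpa only [mul_comm] using hdv
    simp only [m, Complex.ofReal_sub, Complex.ofReal_mul, Complex.ofReal_intCast, mul_sub,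
      Finset.sum_sub_distrib, mul_left_comm (v _), ← Finset.mul_sum, hvh, mul_zero, sub_zero]
  have hm : ∑ i, m i ^ 2 = S * wedgeSq h k := by
    simp only [m, wedgeSq, sub_sq, Finset.sum_add_distrib, Finset.sum_sub_distrib,
      ← Finset.mul_sum, mul_pow]
    have hcross : ∑ i, 2 * (S * k i) * (P * h i) = 2 * S * P * P := by
      rw [Finset.mul_sum]
      exact Finset.sum_congr rfl fun _ _ => by ring
    rw [hcross]
    ring
  have hcs := norm_sum_mul_ofReal_sq_le v m
  rw [hvm, hm, norm_mul, Complex.norm_real, Real.norm_of_nonneg hS.le] at hcs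
  nlinarith

def gnTerm (n : ℝ) (k h : Fin d → ℤ) : ℝ :=
  wedgeSq h k * (znorm k ^ n - znorm (k - h) ^ n) ^ 2 /
    (znorm h ^ (2 * n + 2) * znorm (k - h) ^ (2 * n))

lemma Gn_eq_tsum_gnTerm (n : ℝ) (k : Fin d → ℤ) :
    Gn d n k = ∑' h : {h : Fin d → ℤ // h ≠ 0 ∧ h ≠ k}, ENNReal.ofReal (gnTerm n k h.1) :=
  rfl

lemma gnTerm_nonneg (n : ℝ) (k h : Fin d → ℤ) : 0 ≤ gnTerm n k h := by
  have := wedgeSq_nonneg h k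
  have := znorm_nonneg h
  have := znorm_nonneg (k - h)
  unfold gnTerm
  positivity

lemma norm_sum_mul_sub_mul_sq_le_gnTerm_mul (n : ℝ) {h k : Fin d → ℤ} (hh : h ≠ 0)
    (hhk : h ≠ k) {v : Fin d → ℂ} (hdv : ∑ i, (h i : ℂ) * v i = 0) :
    ‖(∑ r, v r * ((k r - h r : ℤ) : ℂ)) * ((znorm k ^ n - znorm (k - h) ^ n : ℝ) : ℂ)‖ ^ 2 ≤
      gnTerm n k h * (znorm h ^ (2 * n) * cnormSq v * znorm (k - h) ^ (2 * n)) := by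
  set Δ := znorm k ^ n - znorm (k - h) ^ n
  have hzh := znorm_pos hh
  have hzkh := znorm_pos (sub_ne_zero.mpr hhk.symm)
  have hrhs : gnTerm n k h * (znorm h ^ (2 * n) * cnormSq v * znorm (k - h) ^ (2 * n)) =
      cnormSq v * wedgeSq h k * Δ ^ 2 / znorm h ^ 2 := by
    have := (Real.rpow_pos_of_pos hzh (2 * n)).ne'
    have := (Real.rpow_pos_of_pos hzkh (2 * n)).ne'
    rw [gnTerm, Real.rpow_add hzh, Real.rpow_two]
    field_simp
    ring
  rw [hrhs, sum_mul_sub_eq_sum_mul_of_orthogonal hdv, norm_mul, Complex.norm_real,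
    Real.norm_eq_abs, mul_pow, sq_abs, le_div_iff₀ (pow_pos hzh 2), znorm_sq]
  have := mul_le_mul_of_nonneg_right (sum_sq_mul_norm_sum_mul_sq_le hh k hdv) (sq_nonneg Δ)
  linarith

lemma enorm_mul_enorm_sq_le_gnTerm_mul (n : ℝ) {h k : Fin d → ℤ} (hh : h ≠ 0)
    (hhk : h ≠ k) {v : Fin d → ℂ} (hdv : ∑ i, (h i : ℂ) * v i = 0) (x : ℂ) :
    (‖(∑ r, v r * ((k r - h r : ℤ) : ℂ)) * ((znorm k ^ n - znorm (k - h) ^ n : ℝ) : ℂ)‖ₑ *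
        ‖x‖ₑ) ^ 2 ≤
      ENNReal.ofReal (gnTerm n k h) * (ENNReal.ofReal (znorm h ^ (2 * n) * cnormSq v) *
        (ENNReal.ofReal (znorm (k - h) ^ (2 * n)) * ‖x‖ₑ ^ 2)) := by
  have hv : 0 ≤ znorm h ^ (2 * n) * cnormSq v :=
    mul_nonneg (Real.rpow_nonneg (znorm_nonneg h) _) (cnormSq_nonneg v)
  have hT := ENNReal.ofReal_le_ofReal (norm_sum_mul_sub_mul_sq_le_gnTerm_mul n hh hhk hdv)
  rw [ENNReal.ofReal_mul (gnTerm_nonneg n k h), ENNReal.ofReal_mul hv,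
    ENNReal.ofReal_pow (norm_nonneg _), ofReal_norm] at hT
  calc _ ≤ ENNReal.ofReal (gnTerm n k h) * (ENNReal.ofReal (znorm h ^ (2 * n) * cnormSq v) *
          ENNReal.ofReal (znorm (k - h) ^ (2 * n))) * ‖x‖ₑ ^ 2 := by
        rw [mul_pow]
        gcongr
    _ = _ := by ring

lemma ofReal_cnormSq_le_Gn_mul_tsum (n c : ℝ) (v w : (Fin d → ℤ) → Fin d → ℂ)
    (hdiv : ∀ h : Fin d → ℤ, h ≠ 0 → ∑ i, (h i : ℂ) * v h i = 0) (k : Fin d → ℤ)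
    (z : Fin d → ℂ)
    (hz : z = fun i => Complex.I * (c : ℂ) *
      ∑' h : {h : Fin d → ℤ // h ≠ 0 ∧ h ≠ k},
        (∑ r, v h.1 r * ((k r - h.1 r : ℤ) : ℂ)) *
          ((znorm k ^ n - znorm (k - h.1) ^ n : ℝ) : ℂ) * w (k - h.1) i) :
    ENNReal.ofReal (cnormSq z) ≤ ENNReal.ofReal (c ^ 2) * Gn d n k *
      ∑' h : {h : Fin d → ℤ // h ≠ 0 ∧ h ≠ k},
        ENNReal.ofReal (znorm h.1 ^ (2 * n) * cnormSq (v h.1)) *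
          ENNReal.ofReal (znorm (k - h.1) ^ (2 * n) * cnormSq (w (k - h.1))) := by
  set T : {h : Fin d → ℤ // h ≠ 0 ∧ h ≠ k} → ℂ := fun h =>
    (∑ r, v h.1 r * ((k r - h.1 r : ℤ) : ℂ)) * ((znorm k ^ n - znorm (k - h.1) ^ n : ℝ) : ℂ)
  set A : {h : Fin d → ℤ // h ≠ 0 ∧ h ≠ k} → ℝ≥0∞ := fun h =>
    ENNReal.ofReal (znorm h.1 ^ (2 * n) * cnormSq (v h.1))
  set B : {h : Fin d → ℤ // h ≠ 0 ∧ h ≠ k} → ℝ≥0∞ := fun h =>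
    ENNReal.ofReal (znorm (k - h.1) ^ (2 * n))
  have hcoord : ∀ i, ‖z i‖ₑ ^ 2 ≤ ENNReal.ofReal (c ^ 2) *
      (Gn d n k * ∑' h, A h * (B h * ‖w (k - h.1) i‖ₑ ^ 2)) := by
    intro i
    have hzi : ‖z i‖ₑ ≤ ENNReal.ofReal |c| * ∑' h, ‖T h‖ₑ * ‖w (k - h.1) i‖ₑ := by
      rw [hz, ← ofReal_norm, norm_mul, norm_mul, Complex.norm_I, one_mul, Complex.norm_real,
        Real.norm_eq_abs, ENNReal.ofReal_mul (abs_nonneg c), ofReal_norm]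
      gcongr
      simpa only [enorm_mul] using enorm_tsum_le_tsum_enorm (f := fun h => T h * w (k - h.1) i)
    calc ‖z i‖ₑ ^ 2 ≤ ENNReal.ofReal (c ^ 2) * (∑' h, ‖T h‖ₑ * ‖w (k - h.1) i‖ₑ) ^ 2 := by
          rw [← sq_abs c, ENNReal.ofReal_pow (abs_nonneg c), ← mul_pow]
          gcongr
      _ ≤ _ := by
          rw [Gn_eq_tsum_gnTerm]
          gcongr
          exact ENNReal.tsum_sq_le_of_sq_le_mul fun h =>
            enorm_mul_enorm_sq_le_gnTerm_mul n h.2.1 h.2.2 (hdiv h.1 h.2.1) _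
  calc ENNReal.ofReal (cnormSq z)
      ≤ ∑ i, ENNReal.ofReal (c ^ 2) * (Gn d n k * ∑' h, A h * (B h * ‖w (k - h.1) i‖ₑ ^ 2)) := by
        rw [ofReal_cnormSq]
        exact Finset.sum_le_sum fun i _ => hcoord i
    _ = ENNReal.ofReal (c ^ 2) * Gn d n k * ∑' h, A h * (B h * ∑ i, ‖w (k - h.1) i‖ₑ ^ 2) := by
        simp only [← Finset.mul_sum, mul_assoc]
        rw [← Summable.tsum_finsetSum fun _ _ => ENNReal.summable]
        simp only [Finset.mul_sum]
    _ = _ := by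
        congr 1
        refine tsum_congr fun h => ?_
        rw [← ofReal_cnormSq, ← ENNReal.ofReal_mul (by have := znorm_nonneg (k - h.1); positivity)]

end

theorem stmt2_general (d : ℕ) (n : ℝ)
    (v w : (Fin d → ℤ) → Fin d → ℂ)
    (hdiv : ∀ h : Fin d → ℤ, h ≠ 0 → ∑ i, (h i : ℂ) * v h i = 0)
    (hv : Summable (fun h : {h : Fin d → ℤ // h ≠ 0} =>
      znorm h.1 ^ (2 * n) * cnormSq (v h.1)))
    (hw : Summable (fun ℓ : {ℓ : Fin d → ℤ // ℓ ≠ 0} =>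
      znorm ℓ.1 ^ (2 * n) * cnormSq (w ℓ.1)))
    (z : (Fin d → ℤ) → Fin d → ℂ)
    (hz : ∀ k : Fin d → ℤ, k ≠ 0 → z k = fun i =>
      Complex.I * ((2 * Real.pi) ^ (-(d : ℝ) / 2) : ℝ) *
        ∑' h : {h : Fin d → ℤ // h ≠ 0 ∧ h ≠ k},
          (∑ r, v h.1 r * ((k r - h.1 r : ℤ) : ℂ)) *
            ((znorm k ^ n - znorm (k - h.1) ^ n : ℝ) : ℂ) * w (k - h.1) i) :
    ∑' k : {k : Fin d → ℤ // k ≠ 0}, ENNReal.ofReal (cnormSq (z k.1))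
      ≤ ENNReal.ofReal ((2 * Real.pi) ^ (-(d : ℝ))) *
        (⨆ k : {k : Fin d → ℤ // k ≠ 0}, Gn d n k.1) *
        ENNReal.ofReal (∑' h : {h : Fin d → ℤ // h ≠ 0},
          znorm h.1 ^ (2 * n) * cnormSq (v h.1)) *
        ENNReal.ofReal (∑' ℓ : {ℓ : Fin d → ℤ // ℓ ≠ 0},
          znorm ℓ.1 ^ (2 * n) * cnormSq (w ℓ.1)) := by
  set c : ℝ := (2 * Real.pi) ^ (-(d : ℝ) / 2)
  have hc : c ^ 2 = (2 * Real.pi) ^ (-(d : ℝ)) := by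
    rw [← Real.rpow_natCast, ← Real.rpow_mul (by positivity)]
    norm_num
  set F : (Fin d → ℤ) → ℝ≥0∞ := fun h => ENNReal.ofReal (znorm h ^ (2 * n) * cnormSq (v h))
  set W : (Fin d → ℤ) → ℝ≥0∞ := fun ℓ => ENNReal.ofReal (znorm ℓ ^ (2 * n) * cnormSq (w ℓ))
  have hFW : ∀ u : (Fin d → ℤ) → Fin d → ℂ, ∀ ℓ, 0 ≤ znorm ℓ ^ (2 * n) * cnormSq (u ℓ) :=
    fun u ℓ => mul_nonneg (Real.rpow_nonneg (znorm_nonneg ℓ) _) (cnormSq_nonneg _)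
  calc ∑' k : {k : Fin d → ℤ // k ≠ 0}, ENNReal.ofReal (cnormSq (z k.1))
      ≤ ∑' k : {k : Fin d → ℤ // k ≠ 0}, ENNReal.ofReal (c ^ 2) *
          (⨆ k' : {k : Fin d → ℤ // k ≠ 0}, Gn d n k'.1) *
          ∑' h : {h : Fin d → ℤ // h ≠ 0 ∧ h ≠ k.1}, F h.1 * W (k.1 - h.1) :=
        ENNReal.tsum_le_tsum fun k =>
          (ofReal_cnormSq_le_Gn_mul_tsum n c v w hdiv k.1 (z k.1) (hz k.1 k.2)).trans
            (by gcongr; exact le_iSup (fun k' : {k : Fin d → ℤ // k ≠ 0} => Gn d n k'.1) k)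
    _ ≤ ENNReal.ofReal (c ^ 2) * (⨆ k : {k : Fin d → ℤ // k ≠ 0}, Gn d n k.1) *
          ((∑' h : {h : Fin d → ℤ // h ≠ 0}, F h.1) * ∑' ℓ : {ℓ : Fin d → ℤ // ℓ ≠ 0}, W ℓ.1) := by
        rw [ENNReal.tsum_mul_left]
        gcongr
        exact tsum_tsum_mul_sub_le_tsum_mul_tsum F W
    _ = _ := by
        rw [hc, ENNReal.ofReal_tsum_of_nonneg (fun h : {h : Fin d → ℤ // h ≠ 0} => hFW v h.1) hv,
          ENNReal.ofReal_tsum_of_nonneg (fun ℓ : {ℓ : Fin d → ℤ // ℓ ≠ 0} => hFW w ℓ.1) hw]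
        simp only [F, W, mul_assoc]

/-- for `n > d/2 + 1` and families `(v_h), (w_ℓ)` in `ℂ^d` with
`h·v_h = 0` and finite `Σ |h|^{2n}|v_h|²`, `Σ |ℓ|^{2n}|w_ℓ|²`, the coefficients
`z_k = i(2π)^{−d/2} Σ_{h ∈ ℤ^d_{0k}} [v_h·(k−h)](|k|^n − |k−h|^n) w_{k−h}` satisfy
`Σ_k |z_k|² ≤ (2π)^{−d} (sup_k G_n(k)) (Σ_h |h|^{2n}|v_h|²)(Σ_ℓ |ℓ|^{2n}|w_ℓ|²)`
(the left-hand side and the supremum being taken in `[0,∞]`). -/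
theorem stmt2 (d : ℕ) (hd : 2 ≤ d) (n : ℝ) (hn : (d : ℝ) / 2 + 1 < n)
    (v w : (Fin d → ℤ) → Fin d → ℂ)
    (hdiv : ∀ h : Fin d → ℤ, h ≠ 0 → ∑ i, (h i : ℂ) * v h i = 0)
    (hv : Summable (fun h : {h : Fin d → ℤ // h ≠ 0} =>
      znorm h.1 ^ (2 * n) * cnormSq (v h.1)))
    (hw : Summable (fun ℓ : {ℓ : Fin d → ℤ // ℓ ≠ 0} =>
      znorm ℓ.1 ^ (2 * n) * cnormSq (w ℓ.1)))
    (z : (Fin d → ℤ) → Fin d → ℂ)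
    (hz : ∀ k : Fin d → ℤ, k ≠ 0 → z k = fun i =>
      Complex.I * ((2 * Real.pi) ^ (-(d : ℝ) / 2) : ℝ) *
        ∑' h : {h : Fin d → ℤ // h ≠ 0 ∧ h ≠ k},
          (∑ r, v h.1 r * ((k r - h.1 r : ℤ) : ℂ)) *
            ((znorm k ^ n - znorm (k - h.1) ^ n : ℝ) : ℂ) * w (k - h.1) i) :
    ∑' k : {k : Fin d → ℤ // k ≠ 0}, ENNReal.ofReal (cnormSq (z k.1))
      ≤ ENNReal.ofReal ((2 * Real.pi) ^ (-(d : ℝ))) *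
        (⨆ k : {k : Fin d → ℤ // k ≠ 0}, Gn d n k.1) *
        ENNReal.ofReal (∑' h : {h : Fin d → ℤ // h ≠ 0},
          znorm h.1 ^ (2 * n) * cnormSq (v h.1)) *
        ENNReal.ofReal (∑' ℓ : {ℓ : Fin d → ℤ // ℓ ≠ 0},
          znorm ℓ.1 ^ (2 * n) * cnormSq (w ℓ.1)) :=
  stmt2_general d n v w hdiv hv hw z hz
end
end

section
/- Let d ≥ 2 be an integer, ν ∈ (d,∞), and ρ ∈ (2√d, ∞). Then Σ_{h ∈ Z^d, |h| ≥ ρ} 1/|h|^ν ≤ (2 π^{d/2} / Γ(d/2)) Σ_{i=0}^{d−1} binom(d−1, i) · d^{(d−1−i)/2} / ( (ν − i − 1) (ρ − 2√d)^{ν−i−1} ). -/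
/-!
The lattice point `h` owns the unit cube `h + [0,1)^d`, all of whose points `x` lie within
distance `√d` of `h`. If `|h| ≥ ρ`, then on that cube `|x| > ρ - √d` and `|h| ≥ |x| - √d`,
so `|h|^(-ν)` is at most the integral over the cube of `(|x| - √d)^(-ν)`. The cubes are
disjoint, so the lattice sum is bounded by the integral of this radial function over
`|x| > ρ - √d`. In polar coordinates this integral is `(2 π^(d/2) / Γ(d/2))` times
`∫_{ρ-√d}^∞ r^(d-1) (r - √d)^(-ν) dr`. Substituting `r = s + √d` and expanding
`(s + √d)^(d-1)` binomially gives the stated sum.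
-/

noncomputable section

open MeasureTheory Set Metric Module
open scoped Function ENNReal

lemma setIntegral_Ioi_add_const {F : Type*} [NormedAddCommGroup F] [NormedSpace ℝ F]
    (f : ℝ → F) (b a : ℝ) : ∫ y in Ioi (b + a), f y = ∫ s in Ioi b, f (s + a) := by
  rw [← (measurePreserving_add_right volume a).setIntegral_preimage_emb
    (measurableEmbedding_addRight a), preimage_add_const_Ioi, add_sub_cancel_right]

lemma integrableOn_Ioi_add_const_iff {F : Type*} [NormedAddCommGroup F] {f : ℝ → F} {b a : ℝ} :
    IntegrableOn f (Ioi (b + a)) ↔ IntegrableOn (fun s => f (s + a)) (Ioi b) := by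
  rw [← (measurePreserving_add_right volume a).integrableOn_comp_preimage
    (measurableEmbedding_addRight a), preimage_add_const_Ioi, add_sub_cancel_right]
  rfl

lemma Real.sqrt_pow_eq_rpow {x : ℝ} (hx : 0 ≤ x) (n : ℕ) : √x ^ n = x ^ ((n : ℝ) / 2) := by
  rw [Real.sqrt_eq_rpow, ← Real.rpow_natCast, ← Real.rpow_mul hx, one_div_mul_eq_div]

theorem finrank_mul_volume_real_ball_zero_one {E : Type*} [NormedAddCommGroup E]
    [InnerProductSpace ℝ E] [FiniteDimensional ℝ E] [MeasurableSpace E] [BorelSpace E]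
    [Nontrivial E] :
    (finrank ℝ E : ℝ) * volume.real (ball (0 : E) 1) =
      2 * Real.pi ^ ((finrank ℝ E : ℝ) / 2) / Real.Gamma ((finrank ℝ E : ℝ) / 2) := by
  have hn : (0 : ℝ) < finrank ℝ E := by exact_mod_cast finrank_pos
  rw [measureReal_def, InnerProductSpace.volume_ball, ENNReal.ofReal_one, one_pow, one_mul,
    ENNReal.toReal_ofReal (by positivity), Real.sqrt_pow_eq_rpow Real.pi_pos.le,
    Real.Gamma_add_one (by positivity)]
  have := (Real.Gamma_pos_of_pos (by positivity : (0 : ℝ) < finrank ℝ E / 2)).ne'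
  field_simp

lemma add_pow_mul_rpow_neg_eq_sum (n : ℕ) (a ν : ℝ) {s : ℝ} (hs : 0 < s) :
    (s + a) ^ n * s ^ (-ν) =
      ∑ i ∈ Finset.range (n + 1), (n.choose i : ℝ) * a ^ (n - i) * s ^ ((i : ℝ) - ν) := by
  rw [add_pow, Finset.sum_mul]
  refine Finset.sum_congr rfl fun i _ => ?_
  rw [Real.rpow_sub hs, Real.rpow_natCast, Real.rpow_neg hs.le]
  ring

section BinomialTail

variable {ν R : ℝ}

lemma integrableOn_Ioi_const_mul_rpow_sub {n i : ℕ} (hi : i ∈ Finset.range (n + 1))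
    (hν : (n : ℝ) + 1 < ν) (hR : 0 < R) (c : ℝ) :
    IntegrableOn (fun s => c * s ^ ((i : ℝ) - ν)) (Ioi R) := by
  have : (i : ℝ) ≤ n := by exact_mod_cast Nat.lt_succ_iff.mp (Finset.mem_range.mp hi)
  exact (integrableOn_Ioi_rpow_of_lt (by linarith) hR).const_mul c

lemma integrableOn_Ioi_add_pow_mul_rpow_neg {n : ℕ} (hν : (n : ℝ) + 1 < ν) (hR : 0 < R)
    (a : ℝ) : IntegrableOn (fun s => (s + a) ^ n * s ^ (-ν)) (Ioi R) := by
  rw [integrableOn_congr_fun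
    (fun s (hs : s ∈ Ioi R) => add_pow_mul_rpow_neg_eq_sum n a ν (hR.trans hs)) measurableSet_Ioi]
  exact integrable_finsetSum _ fun i hi => integrableOn_Ioi_const_mul_rpow_sub hi hν hR _

lemma integral_Ioi_add_pow_mul_rpow_neg {n : ℕ} (hν : (n : ℝ) + 1 < ν) (hR : 0 < R) (a : ℝ) :
    ∫ s in Ioi R, (s + a) ^ n * s ^ (-ν) =
      ∑ i ∈ Finset.range (n + 1),
        (n.choose i : ℝ) * a ^ (n - i) / ((ν - i - 1) * R ^ (ν - i - 1)) := by
  rw [setIntegral_congr_fun measurableSet_Ioi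
      (fun s hs => add_pow_mul_rpow_neg_eq_sum n a ν (hR.trans hs)),
    integral_finsetSum _ fun i hi => integrableOn_Ioi_const_mul_rpow_sub hi hν hR _]
  refine Finset.sum_congr rfl fun i hi => ?_
  have : (i : ℝ) ≤ n := by exact_mod_cast Nat.lt_succ_iff.mp (Finset.mem_range.mp hi)
  rw [integral_const_mul, integral_Ioi_rpow_of_lt (by linarith) hR,
    show (i : ℝ) - ν + 1 = -(ν - i - 1) by ring, Real.rpow_neg hR.le]
  field_simp

end BinomialTail

-- In the theorem `a = √d` and `R = ρ - 2√d`, so the support `r > R + a` is `r > ρ - √d`.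
def shiftedPowTail (a R ν : ℝ) : ℝ → ℝ := (Ioi (R + a)).indicator fun r => (r - a) ^ (-ν)

section ShiftedPowTail

variable {a R ν : ℝ}

lemma shiftedPowTail_nonneg (hR : 0 ≤ R) (r : ℝ) : 0 ≤ shiftedPowTail a R ν r :=
  indicator_nonneg (fun r hr => Real.rpow_nonneg (by linarith [mem_Ioi.mp hr]) _) r

lemma pow_mul_shiftedPowTail (n : ℕ) (y : ℝ) :
    y ^ n * shiftedPowTail a R ν y =
      (Ioi (R + a)).indicator (fun y => y ^ n * (y - a) ^ (-ν)) y :=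
  (indicator_mul_right _ (· ^ n) _).symm

lemma integrableOn_Ioi_pow_mul_shiftedPowTail {n : ℕ} (ha : 0 ≤ a) (hR : 0 < R)
    (hν : (n : ℝ) + 1 < ν) :
    IntegrableOn (fun y => y ^ n * shiftedPowTail a R ν y) (Ioi 0) := by
  simp_rw [pow_mul_shiftedPowTail]
  rw [integrableOn_indicator_iff measurableSet_Ioi,
    inter_eq_left.2 (Ioi_subset_Ioi (by linarith)), integrableOn_Ioi_add_const_iff]
  simpa only [add_sub_cancel_right] using integrableOn_Ioi_add_pow_mul_rpow_neg hν hR a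

lemma integral_Ioi_pow_mul_shiftedPowTail {n : ℕ} (ha : 0 ≤ a) (hR : 0 < R)
    (hν : (n : ℝ) + 1 < ν) :
    ∫ y in Ioi 0, y ^ n * shiftedPowTail a R ν y =
      ∑ i ∈ Finset.range (n + 1),
        (n.choose i : ℝ) * a ^ (n - i) / ((ν - i - 1) * R ^ (ν - i - 1)) := by
  simp_rw [pow_mul_shiftedPowTail]
  rw [setIntegral_indicator measurableSet_Ioi, inter_eq_right.2 (Ioi_subset_Ioi (by linarith)),
    setIntegral_Ioi_add_const]
  simpa only [add_sub_cancel_right] using integral_Ioi_add_pow_mul_rpow_neg hν hR a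

end ShiftedPowTail

lemma natCast_finrank_pred_add_one (E : Type*) [NormedAddCommGroup E] [NormedSpace ℝ E]
    [FiniteDimensional ℝ E] [Nontrivial E] : ((finrank ℝ E - 1 : ℕ) : ℝ) + 1 = finrank ℝ E := by
  rw [Nat.cast_pred finrank_pos, sub_add_cancel]

section RadialIntegral

variable {E : Type*} [NormedAddCommGroup E] [NormedSpace ℝ E] [FiniteDimensional ℝ E]
  [MeasurableSpace E] [BorelSpace E] [Nontrivial E] (μ : Measure E) [μ.IsAddHaarMeasure]
  {a R ν : ℝ}

lemma integrable_shiftedPowTail_norm (ha : 0 ≤ a) (hR : 0 < R) (hν : (finrank ℝ E : ℝ) < ν) :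
    Integrable (fun x => shiftedPowTail a R ν ‖x‖) μ := by
  rw [integrable_fun_norm_addHaar μ]
  exact integrableOn_Ioi_pow_mul_shiftedPowTail ha hR
    ((natCast_finrank_pred_add_one E).trans_lt hν)

lemma integral_shiftedPowTail_norm (ha : 0 ≤ a) (hR : 0 < R) (hν : (finrank ℝ E : ℝ) < ν) :
    ∫ x, shiftedPowTail a R ν ‖x‖ ∂μ =
      finrank ℝ E * μ.real (ball 0 1) * ∑ i ∈ Finset.range (finrank ℝ E),
        ((finrank ℝ E - 1).choose i : ℝ) * a ^ (finrank ℝ E - 1 - i) /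
          ((ν - i - 1) * R ^ (ν - i - 1)) := by
  rw [integral_fun_norm_addHaar μ, nsmul_eq_mul, smul_eq_mul, mul_assoc]
  simp_rw [smul_eq_mul]
  rw [integral_Ioi_pow_mul_shiftedPowTail ha hR
    ((natCast_finrank_pred_add_one E).trans_lt hν), Nat.sub_add_cancel finrank_pos]

end RadialIntegral

theorem tsum_le_lintegral_of_le_on_disjoint {α ι : Type*} [MeasurableSpace α] [Countable ι]
    {μ : Measure α} {s : ι → Set α} (hs : ∀ i, MeasurableSet (s i))
    (hdisj : Pairwise (Disjoint on s)) (hμ : ∀ i, 1 ≤ μ (s i)) {f : ι → ℝ≥0∞}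
    {g : α → ℝ≥0∞} (hfg : ∀ i, ∀ x ∈ s i, f i ≤ g x) :
    ∑' i, f i ≤ ∫⁻ x, g x ∂μ :=
  calc ∑' i, f i ≤ ∑' i, ∫⁻ x in s i, g x ∂μ := ENNReal.tsum_le_tsum fun i =>
        calc f i ≤ f i * μ (s i) := le_mul_of_one_le_right' (hμ i)
          _ = ∫⁻ _ in s i, f i ∂μ := (setLIntegral_const _ _).symm
          _ ≤ ∫⁻ x in s i, g x ∂μ := setLIntegral_mono' (hs i) (hfg i)
    _ = ∫⁻ x in ⋃ i, s i, g x ∂μ := (lintegral_iUnion hs hdisj g).symm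
    _ ≤ ∫⁻ x, g x ∂μ := setLIntegral_le_lintegral _ _

section LatticeCubes

variable {ι : Type*}

def latticePoint (h : ι → ℤ) : EuclideanSpace ℝ ι := WithLp.toLp 2 fun i => (h i : ℝ)

lemma znorm_eq_norm_latticePoint {d : ℕ} (h : Fin d → ℤ) : znorm h = ‖latticePoint h‖ := by
  simp [znorm, latticePoint, EuclideanSpace.norm_eq]

def unitCube (h : ι → ℤ) : Set (EuclideanSpace ℝ ι) :=
  (MeasurableEquiv.toLp 2 (ι → ℝ)).symm ⁻¹' univ.pi fun i => Ico (h i : ℝ) (h i + 1)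

lemma mem_unitCube {h : ι → ℤ} {x : EuclideanSpace ℝ ι} :
    x ∈ unitCube h ↔ ∀ i, (h i : ℝ) ≤ x i ∧ x i < h i + 1 := by
  simp [unitCube, Set.mem_pi]

lemma measurableSet_unitCube [Countable ι] (h : ι → ℤ) : MeasurableSet (unitCube h) :=
  (MeasurableEquiv.toLp 2 (ι → ℝ)).symm.measurable (.univ_pi fun _ => measurableSet_Ico)

lemma volume_unitCube [Fintype ι] (h : ι → ℤ) : volume (unitCube h) = 1 := by
  rw [unitCube, (EuclideanSpace.volume_preserving_symm_measurableEquiv_toLp ι).measure_preimage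
    (MeasurableSet.univ_pi fun _ => measurableSet_Ico).nullMeasurableSet]
  simp [volume_pi_pi, Real.volume_Ico]

lemma floor_eq_of_mem_unitCube {h : ι → ℤ} {x : EuclideanSpace ℝ ι} (hx : x ∈ unitCube h)
    (i : ι) : ⌊x i⌋ = h i :=
  Int.floor_eq_iff.2 (mem_unitCube.1 hx i)

lemma pairwise_disjoint_unitCube : Pairwise (Disjoint on (unitCube : (ι → ℤ) → _)) :=
  fun _ _ hne => disjoint_left.2 fun _ hx hx' => hne <| funext fun i =>
    (floor_eq_of_mem_unitCube hx i).symm.trans (floor_eq_of_mem_unitCube hx' i)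

lemma norm_sub_latticePoint_lt [Fintype ι] [Nonempty ι] {h : ι → ℤ} {x : EuclideanSpace ℝ ι}
    (hx : x ∈ unitCube h) : ‖x - latticePoint h‖ < √(Fintype.card ι) := by
  rw [EuclideanSpace.norm_eq]
  refine Real.sqrt_lt_sqrt (by positivity) ?_
  calc ∑ i, ‖(x - latticePoint h) i‖ ^ 2 < ∑ _i : ι, 1 := by
        refine Finset.sum_lt_sum_of_nonempty Finset.univ_nonempty fun i _ => ?_
        obtain ⟨hlo, hhi⟩ := mem_unitCube.1 hx i
        simp only [PiLp.sub_apply, latticePoint, Real.norm_eq_abs, sq_abs]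
        nlinarith
    _ = Fintype.card ι := by simp

end LatticeCubes

lemma rpow_neg_norm_le_shiftedPowTail {E : Type*} [SeminormedAddCommGroup E] {x p : E}
    {a R ν : ℝ} (hν : 0 ≤ ν) (hR : 0 < R) (hxp : ‖x - p‖ < a) (hp : R + 2 * a ≤ ‖p‖) :
    ‖p‖ ^ (-ν) ≤ shiftedPowTail a R ν ‖x‖ := by
  have := abs_norm_sub_norm_le x p
  rw [abs_le] at this
  have hx : R + a < ‖x‖ := by linarith
  rw [shiftedPowTail, indicator_of_mem (mem_Ioi.2 hx)]
  exact Real.rpow_le_rpow_of_nonpos (by linarith) (by linarith) (by linarith)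

/-- for `ν ∈ (d,∞)` and `ρ ∈ (2√d, ∞)`,
`Σ_{h ∈ ℤ^d, |h| ≥ ρ} 1/|h|^ν ≤ (2 π^{d/2}/Γ(d/2)) Σ_{i=0}^{d−1} C(d−1,i)
  d^{(d−1−i)/2} / ((ν−i−1)(ρ−2√d)^{ν−i−1})`  (stated in `[0,∞]`). -/
theorem stmt9 (d : ℕ) (hd : 2 ≤ d) (ν : ℝ) (hν : (d : ℝ) < ν)
    (ρ : ℝ) (hρ : 2 * Real.sqrt d < ρ) :
    ∑' h : {h : Fin d → ℤ // ρ ≤ znorm h}, ENNReal.ofReal (1 / znorm h.1 ^ ν)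
      ≤ ENNReal.ofReal (2 * Real.pi ^ ((d : ℝ) / 2) / Real.Gamma ((d : ℝ) / 2) *
          ∑ i ∈ Finset.range d, ((d - 1).choose i : ℝ) * (d : ℝ) ^ (((d : ℝ) - 1 - i) / 2) /
            ((ν - i - 1) * (ρ - 2 * Real.sqrt d) ^ (ν - i - 1))) := by
  have : Nonempty (Fin d) := ⟨⟨0, by omega⟩⟩
  have hR : 0 < ρ - 2 * √d := by linarith
  have hνd : (finrank ℝ (EuclideanSpace ℝ (Fin d)) : ℝ) < ν := by
    rwa [finrank_euclideanSpace_fin]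
  have hcube (h : {h : Fin d → ℤ // ρ ≤ znorm h}) (x) (hx : x ∈ unitCube h.1) :
      ENNReal.ofReal (1 / znorm h.1 ^ ν) ≤
        ENNReal.ofReal (shiftedPowTail √d (ρ - 2 * √d) ν ‖x‖) := by
    have hh := h.2
    rw [znorm_eq_norm_latticePoint] at hh ⊢
    rw [one_div, ← Real.rpow_neg (norm_nonneg _)]
    refine ENNReal.ofReal_le_ofReal <| rpow_neg_norm_le_shiftedPowTail
      ((Nat.cast_nonneg d).trans hν.le) hR ?_ (by linarith)
    simpa using norm_sub_latticePoint_lt hx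
  calc _ ≤ ∫⁻ x : EuclideanSpace ℝ (Fin d),
          ENNReal.ofReal (shiftedPowTail √d (ρ - 2 * √d) ν ‖x‖) :=
        tsum_le_lintegral_of_le_on_disjoint
          (fun h : {h : Fin d → ℤ // ρ ≤ znorm h} => measurableSet_unitCube h.1)
          (pairwise_disjoint_unitCube.comp_of_injective Subtype.val_injective)
          (fun h => (volume_unitCube h.1).ge) hcube
    _ = ENNReal.ofReal (∫ x, shiftedPowTail √d (ρ - 2 * √d) ν ‖x‖) :=
        (ofReal_integral_eq_lintegral_ofReal
          (integrable_shiftedPowTail_norm volume (Real.sqrt_nonneg _) hR hνd)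
          (ae_of_all _ fun _ => shiftedPowTail_nonneg hR.le _)).symm
    _ = _ := by
      rw [integral_shiftedPowTail_norm volume (Real.sqrt_nonneg _) hR hνd,
        finrank_mul_volume_real_ball_zero_one, finrank_euclideanSpace_fin]
      congr 2
      refine Finset.sum_congr rfl fun i hi => ?_
      have hi : i ≤ d - 1 := by have := Finset.mem_range.1 hi; omega
      rw [Real.sqrt_pow_eq_rpow (Nat.cast_nonneg d), Nat.cast_sub hi, Nat.cast_pred (by omega)]
end
end
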